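/- arXiv:2512.08711 — 4 statements merged into one kernel-verified Lean document; each statement's English description precedes it below -/
import Mathlib

section
/- Let A ⊆ T, w ∈ W and t ∈ T. Then t ∉ w·A if and only if t ∈ (tw)·A, where w·A = N(w) △ wAw⁻¹ is the twisted inversion set (△ denotes symmetric difference). -/
/- Common definitions: reflections, inversion sets, Bruhat graph paths, Bruhat preclosure,
   twisted inversion sets, twisted lengths, twisted Bruhat graph/order, reflection orders,
   initial sections, and the right weak order, for a Coxeter system `cs`. -/

namespace CoxeterSystem

variable {B : Type*} {W : Type*} [Group W] {M : CoxeterMatrix B}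
variable (cs : CoxeterSystem M W)

/-- The set of reflections `T`. -/
def reflSet : Set W := {t | cs.IsReflection t}

/-- The inversion set `N(w) = {t ∈ T : ℓ(tw) < ℓ(w)}`. -/
def invSet (w : W) : Set W :=
  {t | cs.IsReflection t ∧ cs.length (t * w) < cs.length w}

/-- One step in the Bruhat graph using only edges labelled (on the right) by elements of `A`:
`u → u * t` with `t ∈ A` a reflection and `ℓ(u) < ℓ(u * t)`. -/
def AStep (A : Set W) (u v : W) : Prop :=
  ∃ t ∈ A, cs.IsReflection t ∧ v = u * t ∧ cs.length u < cs.length v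

/-- The (right) Bruhat preclosure `⟨A⟩`: reflections reachable from the identity by a path in the
Bruhat graph all of whose edge labels lie in `A`. -/
def bclosure (A : Set W) : Set W :=
  {t | cs.IsReflection t ∧ Relation.ReflTransGen (cs.AStep A) 1 t}

/-- The twisted inversion set `w · A = N(w) △ w A w⁻¹`. -/
def twisted (w : W) (A : Set W) : Set W :=
  symmDiff (cs.invSet w) ((fun x => w * x * w⁻¹) '' A)

/-- The twisted length `ℓ_A(v, w) = ℓ(w v⁻¹) - 2 |N(v w⁻¹) ∩ v · A|`. -/
noncomputable def tlen (A : Set W) (v w : W) : ℤ :=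
  (cs.length (w * v⁻¹) : ℤ) - 2 * ((cs.invSet (v * w⁻¹)) ∩ cs.twisted v A).ncard

/-- The one-argument twisted length `ℓ_A(w) = ℓ_A(e, w) = ℓ(w) - 2 |N(w⁻¹) ∩ A|`. -/
noncomputable def tlen₀ (A : Set W) (w : W) : ℤ :=
  (cs.length w : ℤ) - 2 * ((cs.invSet w⁻¹) ∩ A).ncard

/-- An edge of the twisted Bruhat graph `Ω_{(W,A)}`: Bruhat graph edges with labels not in `A`,
and reversed Bruhat graph edges with labels in `A`. -/
def TwEdge (A : Set W) (u v : W) : Prop :=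
  (∃ t, cs.IsReflection t ∧ t ∉ A ∧ v = u * t ∧ cs.length u < cs.length v) ∨
  (∃ t, cs.IsReflection t ∧ t ∈ A ∧ u = v * t ∧ cs.length v < cs.length u)

/-- The twisted Bruhat order `u ≤_A v`: reachability in the twisted Bruhat graph. -/
def tle (A : Set W) (u v : W) : Prop := Relation.ReflTransGen (cs.TwEdge A) u v

/-- A reflection subgroup: a subgroup generated by the reflections it contains. -/
def IsReflectionSubgroup (W' : Subgroup W) : Prop :=
  W' = Subgroup.closure ((W' : Set W) ∩ cs.reflSet)

/-- The canonical generators `χ(W') = {t ∈ T : N(t) ∩ W' = {t}}` of a reflection subgroup. -/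
def chi (W' : Subgroup W) : Set W :=
  {t | cs.IsReflection t ∧ cs.invSet t ∩ (W' : Set W) = {t}}

/-- A reflection order: a strict total order on the set of reflections such that for every
dihedral reflection subgroup `W'` with canonical generators `{r, s}`, `r ≠ s`, if `r ≺ s` then
every reflection of `W'` lies (weakly) between `r` and `s`.  (This betweenness condition for
*all* dihedral reflection subgroups is equivalent to the alternating-chain condition
`r ≺ rsr ≺ ⋯ ≺ srs ≺ s`.) -/
def IsReflectionOrder (lt : W → W → Prop) : Prop :=
  (∀ t ∈ cs.reflSet, ¬ lt t t) ∧
  (∀ t₁ ∈ cs.reflSet, ∀ t₂ ∈ cs.reflSet, ∀ t₃ ∈ cs.reflSet,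
      lt t₁ t₂ → lt t₂ t₃ → lt t₁ t₃) ∧
  (∀ t₁ ∈ cs.reflSet, ∀ t₂ ∈ cs.reflSet, t₁ = t₂ ∨ lt t₁ t₂ ∨ lt t₂ t₁) ∧
  (∀ W' : Subgroup W, cs.IsReflectionSubgroup W' →
    ∀ r s : W, cs.chi W' = {r, s} → r ≠ s → lt r s →
      ∀ t ∈ (W' : Set W) ∩ cs.reflSet, (t = r ∨ lt r t) ∧ (t = s ∨ lt t s))

/-- `A` is an initial section of some reflection order. -/
def IsInitialSection (A : Set W) : Prop :=
  A ⊆ cs.reflSet ∧ ∃ lt : W → W → Prop, cs.IsReflectionOrder lt ∧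
    ∀ a ∈ A, ∀ b ∈ cs.reflSet \ A, lt a b

/-- The right weak order, characterized by containment of inversion sets. -/
def wle (u v : W) : Prop := cs.invSet u ⊆ cs.invSet v

/-- `j` is the join `u ∨_R v` in the right weak order. -/
def IsJoin (u v j : W) : Prop :=
  cs.wle u j ∧ cs.wle v j ∧ ∀ z : W, cs.wle u z → cs.wle v z → cs.wle j z

/-- The Bruhat preclosure computed inside a subgroup `H` of `W` (for a standard parabolic
subgroup `H = W_I`, the length function and the reflections of `W_I` are the restrictions of
those of `W`, so this is the Bruhat preclosure of the Coxeter system `(W_I, I)`). -/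
def bclosureIn (H : Subgroup W) (A : Set W) : Set W :=
  {t | cs.IsReflection t ∧ t ∈ H ∧
    Relation.ReflTransGen (fun u v => u ∈ H ∧ v ∈ H ∧ cs.AStep A u v) 1 t}

end CoxeterSystem

open CoxeterSystem in
/-- `t ∉ w · A` iff `t ∈ (t w) · A` for a reflection `t`. -/
theorem not_mem_twisted_iff_mem_twisted_mul
    {B : Type*} {W : Type*} [Group W] {M : CoxeterMatrix B} (cs : CoxeterSystem M W)
    (A : Set W) (hA : A ⊆ cs.reflSet) (w t : W) (ht : cs.IsReflection t) :
    t ∉ cs.twisted w A ↔ t ∈ cs.twisted (t * w) A := by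
  have hlen : cs.length (t * (t * w)) < cs.length (t * w) ↔
      ¬ cs.length (t * w) < cs.length w := by
    have := ht.isLeftInversion_mul_right_iff (cs := cs) (w := w)
    simp only [CoxeterSystem.IsLeftInversion, ht, true_and] at this
    exact this
  have hconj : t ∈ (fun x => t * w * x * (t * w)⁻¹) '' A ↔
      t ∈ (fun x => w * x * w⁻¹) '' A := by
    constructor <;> rintro ⟨a, ha, h⟩ <;> refine ⟨a, ha, ?_⟩ <;> dsimp only at h ⊢
    · have h' : t * (w * a * w⁻¹) * t⁻¹ = t := by
        calc t * (w * a * w⁻¹) * t⁻¹ = t * w * a * (t * w)⁻¹ := by group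
          _ = t := h
      calc w * a * w⁻¹ = t⁻¹ * (t * (w * a * w⁻¹) * t⁻¹) * t := by group
        _ = t⁻¹ * t * t := by rw [h']
        _ = t := by group
    · show t * w * a * (t * w)⁻¹ = t
      calc t * w * a * (t * w)⁻¹ = t * (w * a * w⁻¹) * t⁻¹ := by group
        _ = t * t * t⁻¹ := by rw [h]
        _ = t := by group
  simp only [CoxeterSystem.twisted, Set.mem_symmDiff, CoxeterSystem.invSet,
    Set.mem_setOf_eq, ht, true_and] at *
  rw [hconj]
  by_cases hm : t ∈ (fun x => w * x * w⁻¹) '' A <;> simp [hm, hlen]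
end

section
/- For A ⊆ T and u,v,w ∈ W, the twisted length is additive: ℓ_A(u,v) + ℓ_A(v,w) = ℓ_A(u,w), and consequently ℓ_A(v,w) = ℓ_A(w) − ℓ_A(v) and ℓ_A(u,v) = −ℓ_A(v,u). -/
/-! All three identities follow from `ℓ_A(v, w) = ℓ_A(w) - ℓ_A(v)`.

Everything rests on two properties of left inversion sets: `|N(w)| = ℓ(w)` and the cocycle rule
`N(xy) = N(x) △ x N(y) x⁻¹`. Both come from the reflection cocycle `η : W × W → ℤˣ`, read off
the homomorphism `W → Perm (W × ℤˣ)` lifting `s ↦ ((t, ε) ↦ (s t s, ±ε))`, with the sign flipped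
exactly when `t = s`. The Coxeter relations hold because along the alternating word of length
`2 m(s, s')` every reflection is met an even number of times. Then `η(w, t) = -1` exactly when `t`
is a right inversion of `w`; this is the strong exchange condition.

With `P = N(v)`, `Q = N(v w⁻¹)` and `S = v A v⁻¹`, the cocycle rule gives
`P △ Q = v N(w⁻¹) v⁻¹` and `P = v N(v⁻¹) v⁻¹`, and since conjugation preserves cardinalities,
`ℓ_A(v, w) = ℓ_A(w) - ℓ_A(v)` becomes the identity
`|Q| - 2|Q ∩ (P △ S)| = (|P △ Q| - 2|(P △ Q) ∩ S|) - (|P| - 2|P ∩ S|)` for finite sets. -/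

open scoped symmDiff

theorem mem_image_conj_iff {G : Type*} [Group G] {S : Set G} {x t : G} :
    t ∈ (fun a => x * a * x⁻¹) '' S ↔ x⁻¹ * t * x ∈ S := by
  constructor
  · rintro ⟨a, ha, rfl⟩
    simpa [mul_assoc] using ha
  · exact fun h => ⟨_, h, by group⟩

theorem List.even_count_of_getElem_eq_getElem_add {α : Type*} [BEq α] (L : List α) (n : ℕ)
    (hlen : L.length = 2 * n) (hper : ∀ k (hk : k < n), L[k] = L[k + n]) (a : α) :
    Even (L.count a) := by
  have hdrop : L.drop n = L.take n := by
    apply ext_getElem (by simp [hlen]; omega)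
    intro k h₁ h₂
    simp only [getElem_drop, getElem_take]
    rw [hper k (by simp at h₂; omega)]
    congr 1
    omega
  rw [← take_append_drop n L, count_append, hdrop]
  exact Even.add_self _

namespace Set

variable {α : Type*} {P Q S : Set α}

theorem ncard_symmDiff_add_two_mul_ncard_inter (hP : P.Finite) (hQ : Q.Finite) :
    (P ∆ Q).ncard + 2 * (P ∩ Q).ncard = P.ncard + Q.ncard := by
  have hP' := ncard_inter_add_ncard_sdiff_eq_ncard P Q hP
  have hQ' := ncard_inter_add_ncard_sdiff_eq_ncard Q P hQ
  rw [inter_comm] at hQ'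
  rw [Set.symmDiff_def, ncard_union_eq disjoint_sdiff_sdiff hP.sdiff hQ.sdiff]
  omega

theorem ncard_sub_two_mul_ncard_inter_symmDiff (hP : P.Finite) (hQ : Q.Finite) :
    (Q.ncard : ℤ) - 2 * (Q ∩ (P ∆ S)).ncard =
      ((P ∆ Q).ncard - 2 * ((P ∆ Q) ∩ S).ncard) - (P.ncard - 2 * (P ∩ S).ncard) := by
  have hPQS := ncard_symmDiff_add_two_mul_ncard_inter (hP.inter_of_left Q) (hQ.inter_of_left S)
  have hPSQ := ncard_symmDiff_add_two_mul_ncard_inter (hP.inter_of_left S) (hQ.inter_of_left S)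
  have hPQ := ncard_symmDiff_add_two_mul_ncard_inter hP hQ
  rw [show P ∩ Q ∩ (Q ∩ S) = P ∩ Q ∩ S by ext; simp; tauto] at hPQS
  rw [show P ∩ S ∩ (Q ∩ S) = P ∩ Q ∩ S by ext; simp; tauto] at hPSQ
  rw [inter_symmDiff_distrib_left, inter_symmDiff_distrib_right, inter_comm Q P]
  omega

end Set

namespace CoxeterSystem

open List
open scoped Classical

variable {B : Type*} {W : Type*} [Group W] {M : CoxeterMatrix B} (cs : CoxeterSystem M W)

local prefix:100 "s " => cs.simple
local prefix:100 "π " => cs.wordProd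
local prefix:100 "ris " => cs.rightInvSeq
local prefix:100 "lis " => cs.leftInvSeq

theorem simple_mul_mul_simple_eq_simple_iff (i : B) (x : W) : s i * x * s i = s i ↔ x = s i := by
  constructor
  · intro h
    simpa [mul_assoc] using congrArg (fun y => s i * y * s i) h
  · rintro rfl
    simp [simple_mul_simple_self]

theorem alternatingWord_two_mul_succ (i j : B) (m : ℕ) :
    alternatingWord i j (2 * (m + 1)) = i :: j :: alternatingWord i j (2 * m) := by
  rw [show 2 * (m + 1) = 2 * m + 1 + 1 by ring, alternatingWord_succ', alternatingWord_succ']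
  simp

theorem alternatingWord_two_mul_reverse (i j : B) (m : ℕ) :
    (alternatingWord i j (2 * m)).reverse = alternatingWord j i (2 * m) := by
  induction m with
  | zero => rfl
  | succ m ih =>
    rw [show 2 * (m + 1) = 2 * m + 1 + 1 by ring, alternatingWord_succ', alternatingWord_succ',
      alternatingWord_succ, alternatingWord_succ]
    simp [ih]

noncomputable def simpleSignMap (i : B) (p : W × ℤˣ) : W × ℤˣ :=
  (s i * p.1 * s i, if p.1 = s i then -p.2 else p.2)

theorem simpleSignMap_involutive (i : B) : Function.Involutive (cs.simpleSignMap i) := by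
  rintro ⟨t, ε⟩
  by_cases h : t = s i
  · subst h
    simp [simpleSignMap, simple_mul_simple_self]
  · have h' : s i * t * s i ≠ s i := (cs.simple_mul_mul_simple_eq_simple_iff i t).not.mpr h
    simp only [simpleSignMap, if_neg h, if_neg h', Prod.mk.injEq, and_true]
    simp [← mul_assoc, simple_mul_simple_self]

noncomputable def simpleSign (i : B) : Equiv.Perm (W × ℤˣ) := (cs.simpleSignMap_involutive i).toPerm

theorem prod_map_simpleSign_apply (ω : List B) (t : W) (ε : ℤˣ) :
    (ω.map cs.simpleSign).prod (t, ε) =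
      (π ω * t * (π ω)⁻¹, (-1) ^ (ris ω).count t * ε) := by
  induction ω with
  | nil => simp
  | cons i ω ih =>
    have hiff : π ω * t * (π ω)⁻¹ = s i ↔ (π ω)⁻¹ * s i * π ω = t := by
      constructor <;> intro h <;> simp [← h, mul_assoc]
    rw [map_cons, prod_cons, Equiv.Perm.mul_apply, ih]
    simp only [simpleSign, Function.Involutive.coe_toPerm, simpleSignMap, rightInvSeq,
      count_cons, beq_iff_eq, wordProd_cons, mul_inv_rev, inv_simple, hiff, Prod.mk.injEq]
    refine ⟨by group, ?_⟩
    split_ifs <;> simp [pow_succ]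

theorem simpleSign_mul_pow (i j : B) (m : ℕ) :
    (cs.simpleSign i * cs.simpleSign j) ^ m =
      ((alternatingWord i j (2 * m)).map cs.simpleSign).prod := by
  induction m with
  | zero => simp [alternatingWord]
  | succ m ih => rw [alternatingWord_two_mul_succ, pow_succ', ih]; simp [mul_assoc]

theorem even_count_rightInvSeq_alternatingWord (i j : B) (t : W) :
    Even ((ris (alternatingWord i j (2 * M i j))).count t) := by
  rw [← alternatingWord_two_mul_reverse j i, rightInvSeq_reverse, count_reverse]
  refine List.even_count_of_getElem_eq_getElem_add _ (M i j) (by simp) (fun k hk => ?_) t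
  rw [getElem_leftInvSeq_alternatingWord cs j i _ k (by omega),
    getElem_leftInvSeq_alternatingWord cs j i _ (k + M i j) (by omega),
    prod_alternatingWord_eq_mul_pow, prod_alternatingWord_eq_mul_pow]
  simp [pow_add, show (2 * (k + M i j) + 1) / 2 = k + M i j by omega,
    show (2 * k + 1) / 2 = k by omega]

theorem isLiftable_simpleSign : M.IsLiftable cs.simpleSign := by
  intro i j
  ext1 ⟨t, ε⟩
  obtain ⟨c, hc⟩ := cs.even_count_rightInvSeq_alternatingWord i j t
  have hπ : π (alternatingWord i j (2 * M i j)) = 1 := by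
    simp [prod_alternatingWord_eq_mul_pow]
  rw [simpleSign_mul_pow, prod_map_simpleSign_apply, hπ, hc, ← two_mul, pow_mul]
  simp

noncomputable def signRep : W →* Equiv.Perm (W × ℤˣ) :=
  cs.lift ⟨cs.simpleSign, cs.isLiftable_simpleSign⟩

theorem signRep_wordProd_apply (ω : List B) (t : W) (ε : ℤˣ) :
    cs.signRep (π ω) (t, ε) = (π ω * t * (π ω)⁻¹, (-1) ^ (ris ω).count t * ε) := by
  rw [← prod_map_simpleSign_apply, wordProd, map_list_prod, map_map]
  congr 3
  funext i
  exact cs.lift_apply_simple cs.isLiftable_simpleSign i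

noncomputable def reflSign (w t : W) : ℤˣ := (cs.signRep w (t, 1)).2

theorem reflSign_wordProd (ω : List B) (t : W) :
    cs.reflSign (π ω) t = (-1) ^ (ris ω).count t := by
  simp [reflSign, signRep_wordProd_apply]

theorem signRep_apply (w t : W) (ε : ℤˣ) :
    cs.signRep w (t, ε) = (w * t * w⁻¹, cs.reflSign w t * ε) := by
  obtain ⟨ω, rfl⟩ := cs.wordProd_surjective w
  rw [signRep_wordProd_apply, reflSign_wordProd]

theorem reflSign_mul (x y t : W) :
    cs.reflSign (x * y) t = cs.reflSign x (y * t * y⁻¹) * cs.reflSign y t := by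
  have h := congrArg Prod.snd (Equiv.Perm.mul_apply (cs.signRep x) (cs.signRep y) (t, 1))
  simpa [← map_mul, signRep_apply] using h

theorem reflSign_one (t : W) : cs.reflSign 1 t = 1 := by
  simp [reflSign]

theorem reflSign_simple_self (i : B) : cs.reflSign (s i) (s i) = -1 := by
  simpa using cs.reflSign_wordProd [i] (s i)

theorem reflSign_self {t : W} (ht : cs.IsReflection t) : cs.reflSign t t = -1 := by
  obtain ⟨u, i, rfl⟩ := ht
  have hinv := cs.reflSign_mul u u⁻¹ (u * s i * u⁻¹)
  rw [mul_inv_cancel, reflSign_one, show u⁻¹ * (u * s i * u⁻¹) * u⁻¹⁻¹ = s i by group] at hinv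
  rw [reflSign_mul, reflSign_mul, show u⁻¹ * (u * s i * u⁻¹) * u⁻¹⁻¹ = s i by group,
    show s i * s i * (s i)⁻¹ = s i by group, reflSign_simple_self, mul_neg_one, neg_mul, ← hinv]

theorem mem_rightInvSeq_of_reflSign_eq_neg_one {ω : List B} {t : W}
    (h : cs.reflSign (π ω) t = -1) : t ∈ ris ω := by
  rw [reflSign_wordProd, neg_one_pow_eq_neg_one_iff_odd (by decide)] at h
  exact List.count_pos_iff.mp h.pos

theorem isRightInversion_of_reflSign_eq_neg_one {w t : W} (h : cs.reflSign w t = -1) :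
    cs.IsRightInversion w t := by
  obtain ⟨ω, hω, rfl⟩ := cs.exists_isReduced w
  exact cs.isRightInversion_of_mem_rightInvSeq hω (cs.mem_rightInvSeq_of_reflSign_eq_neg_one h)

theorem isRightInversion_iff_reflSign_eq_neg_one {w t : W} (ht : cs.IsReflection t) :
    cs.IsRightInversion w t ↔ cs.reflSign w t = -1 := by
  refine ⟨fun h => ?_, cs.isRightInversion_of_reflSign_eq_neg_one⟩
  by_contra hne
  have hwt : cs.reflSign (w * t) t = -1 := by
    rw [reflSign_mul, show t * t * t⁻¹ = t by group, reflSign_self cs ht,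
      (Int.units_eq_one_or _).resolve_right hne, one_mul]
  have hlt := (cs.isRightInversion_of_reflSign_eq_neg_one hwt).2
  rw [mul_assoc, ht.mul_self, mul_one] at hlt
  exact lt_asymm h.2 hlt

theorem mem_rightInvSeq_of_isRightInversion {ω : List B} {t : W}
    (h : cs.IsRightInversion (π ω) t) : t ∈ ris ω :=
  cs.mem_rightInvSeq_of_reflSign_eq_neg_one ((cs.isRightInversion_iff_reflSign_eq_neg_one h.1).mp h)

theorem mem_leftInvSeq_of_isLeftInversion {ω : List B} {t : W}
    (h : cs.IsLeftInversion (π ω) t) : t ∈ lis ω := by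
  rw [← cs.isRightInversion_inv_iff, ← wordProd_reverse] at h
  simpa [rightInvSeq_reverse] using cs.mem_rightInvSeq_of_isRightInversion h

theorem invSet_wordProd {ω : List B} (hω : cs.IsReduced ω) :
    cs.invSet (π ω) = ((lis ω).toFinset : Set W) := by
  ext t
  simpa using ⟨cs.mem_leftInvSeq_of_isLeftInversion, cs.isLeftInversion_of_mem_leftInvSeq hω⟩

theorem invSet_finite (w : W) : (cs.invSet w).Finite := by
  obtain ⟨ω, hω, rfl⟩ := cs.exists_isReduced w
  rw [invSet_wordProd cs hω]
  exact Finset.finite_toSet _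

theorem ncard_invSet (w : W) : (cs.invSet w).ncard = cs.length w := by
  obtain ⟨ω, hω, rfl⟩ := cs.exists_isReduced w
  rw [invSet_wordProd cs hω, Set.ncard_coe_finset, toFinset_card_of_nodup hω.nodup_leftInvSeq,
    length_leftInvSeq, hω.eq]

theorem mem_invSet_iff_reflSign_eq_neg_one {w t : W} :
    t ∈ cs.invSet w ↔ cs.IsReflection t ∧ cs.reflSign w⁻¹ t = -1 := by
  refine (cs.isRightInversion_inv_iff (w := w)).symm.trans ⟨fun h => ⟨h.1, ?_⟩, fun h => ?_⟩
  · exact (cs.isRightInversion_iff_reflSign_eq_neg_one h.1).mp h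
  · exact (cs.isRightInversion_iff_reflSign_eq_neg_one h.1).mpr h.2

theorem invSet_mul (x y : W) :
    cs.invSet (x * y) = cs.invSet x ∆ ((fun a => x * a * x⁻¹) '' cs.invSet y) := by
  ext t
  have hconj : cs.IsReflection (x⁻¹ * t * x) ↔ cs.IsReflection t := by
    simpa using cs.isReflection_conj_iff x⁻¹ t
  rw [Set.mem_symmDiff, mem_image_conj_iff, mem_invSet_iff_reflSign_eq_neg_one,
    mem_invSet_iff_reflSign_eq_neg_one, mem_invSet_iff_reflSign_eq_neg_one, mul_inv_rev,
    reflSign_mul, inv_inv, hconj]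
  rcases Int.units_eq_one_or (cs.reflSign y⁻¹ (x⁻¹ * t * x)) with h₁ | h₁ <;>
    rcases Int.units_eq_one_or (cs.reflSign x⁻¹ t) with h₂ | h₂ <;> simp [h₁, h₂]

theorem invSet_one : cs.invSet 1 = ∅ := by
  ext t
  simp [invSet]

theorem conj_image_invSet_inv (v : W) :
    (fun a => v * a * v⁻¹) '' cs.invSet v⁻¹ = cs.invSet v := by
  have h := cs.invSet_mul v v⁻¹
  rw [mul_inv_cancel, invSet_one, eq_comm, ← Set.bot_eq_empty, symmDiff_eq_bot] at h
  exact h.symm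

theorem tlen_eq_tlen₀_sub_tlen₀ (A : Set W) (v w : W) :
    cs.tlen A v w = cs.tlen₀ A w - cs.tlen₀ A v := by
  set conj : W → W := fun a => v * a * v⁻¹
  have hconj : Function.Injective conj := fun a b h => by simpa [conj] using h
  have hPQ : cs.invSet v ∆ cs.invSet (v * w⁻¹) = conj '' cs.invSet w⁻¹ := by
    rw [invSet_mul, symmDiff_symmDiff_cancel_left]
  have hw : cs.length w = (cs.invSet v ∆ cs.invSet (v * w⁻¹)).ncard := by
    rw [hPQ, Set.ncard_image_of_injective _ hconj, ncard_invSet, length_inv]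
  have hwA : (cs.invSet w⁻¹ ∩ A).ncard
      = ((cs.invSet v ∆ cs.invSet (v * w⁻¹)) ∩ conj '' A).ncard := by
    rw [hPQ, ← Set.image_inter hconj, Set.ncard_image_of_injective _ hconj]
  have hvA : (cs.invSet v⁻¹ ∩ A).ncard = (cs.invSet v ∩ conj '' A).ncard := by
    rw [← cs.conj_image_invSet_inv v, ← Set.image_inter hconj, Set.ncard_image_of_injective _ hconj]
  have hwv : cs.length (w * v⁻¹) = (cs.invSet (v * w⁻¹)).ncard := by
    rw [ncard_invSet, ← length_inv, mul_inv_rev, inv_inv]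
  rw [tlen, tlen₀, tlen₀, twisted, hw, hwA, hvA, hwv, ← ncard_invSet]
  exact Set.ncard_sub_two_mul_ncard_inter_symmDiff (cs.invSet_finite v) (cs.invSet_finite _)

end CoxeterSystem

open CoxeterSystem in
theorem tlen_add_general
    {B : Type*} {W : Type*} [Group W] {M : CoxeterMatrix B} (cs : CoxeterSystem M W)
    (A : Set W) (u v w : W) :
    cs.tlen A u v + cs.tlen A v w = cs.tlen A u w ∧
    cs.tlen A v w = cs.tlen₀ A w - cs.tlen₀ A v ∧
    cs.tlen A u v = - cs.tlen A v u := by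
  refine ⟨?_, cs.tlen_eq_tlen₀_sub_tlen₀ A v w, ?_⟩ <;>
    simp only [cs.tlen_eq_tlen₀_sub_tlen₀] <;> ring

open CoxeterSystem in
/-- Additivity of the twisted length: `ℓ_A(u,v) + ℓ_A(v,w) = ℓ_A(u,w)`, and consequently
`ℓ_A(v,w) = ℓ_A(w) - ℓ_A(v)` and `ℓ_A(u,v) = -ℓ_A(v,u)`. -/
theorem tlen_add
    {B : Type*} {W : Type*} [Group W] {M : CoxeterMatrix B} (cs : CoxeterSystem M W)
    (A : Set W) (hA : A ⊆ cs.reflSet) (u v w : W) :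
    cs.tlen A u v + cs.tlen A v w = cs.tlen A u w ∧
    cs.tlen A v w = cs.tlen₀ A w - cs.tlen₀ A v ∧
    cs.tlen A u v = - cs.tlen A v u :=
  tlen_add_general cs A u v w
end

section
/- For any Coxeter system (W,S), the Bruhat preclosure of the set of simple reflections equals the full set of reflections: ⟨S⟩ = T. -/
/- Common definitions: reflections, inversion sets, Bruhat graph paths, Bruhat preclosure,
   twisted inversion sets, twisted lengths, twisted Bruhat graph/order, reflection orders,
   initial sections, and the right weak order, for a Coxeter system `cs`. -/

namespace CoxeterSystem

variable {B : Type*} {W : Type*} [Group W] {M : CoxeterMatrix B}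
variable (cs : CoxeterSystem M W)

/-- Prefixes of a reduced word are reduced, so each appended letter is an upward simple edge. -/
theorem reflTransGen_aStep_simples_wordProd {ω : List B} (hω : cs.IsReduced ω) :
    Relation.ReflTransGen (cs.AStep (Set.range cs.simple)) 1 (cs.wordProd ω) := by
  induction ω using List.reverseRecOn with
  | nil => rw [wordProd_nil]
  | append_singleton ω i ih =>
    have hω' : cs.IsReduced ω := by simpa using hω.take ω.length
    refine .tail (ih hω') ⟨cs.simple i, ⟨i, rfl⟩, cs.isReflection_simple i, ?_, ?_⟩
    · rw [wordProd_append, wordProd_singleton]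
    · rw [hω', hω, List.length_append, List.length_singleton]
      exact Nat.lt_succ_self _

theorem reflTransGen_aStep_simples (w : W) :
    Relation.ReflTransGen (cs.AStep (Set.range cs.simple)) 1 w := by
  obtain ⟨ω, hω, rfl⟩ := cs.exists_isReduced w
  exact cs.reflTransGen_aStep_simples_wordProd hω

end CoxeterSystem

open CoxeterSystem in
/-- The Bruhat preclosure of the set of simple reflections is the full set of reflections. -/
theorem bclosure_simples_eq_reflSet
    {B : Type*} {W : Type*} [Group W] {M : CoxeterMatrix B} (cs : CoxeterSystem M W) :
    cs.bclosure (Set.range cs.simple) = cs.reflSet :=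
  Set.ext fun _ => ⟨And.left, fun ht => ⟨ht, cs.reflTransGen_aStep_simples _⟩⟩
end

section
/- Let (W,S) be a finite Coxeter system with long element w₀ and u, v ∈ W. If u ∨_R v = w₀ (join in the right weak order), then N(u ∨_R v) = ⟨N(u) ∪ N(v)⟩. -/
/-!
Since `w₀` is longest, every reflection is a left inversion of `w₀`, and the cocycle rule
`N_R(xy) = N_R(y) △ y⁻¹ N_R(x) y` then shows that `N(x⁻¹ w₀)` consists of the reflections `t`
with `ℓ(x t) > ℓ(x)`. If some `x ≠ e` had no right descent in `A = N(u) ∪ N(v)`, then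
`A ⊆ N(x⁻¹ w₀)`, so `x⁻¹ w₀` would be an upper bound of `u` and `v`; hence
`T = N(w₀) ⊆ N(x⁻¹ w₀)` and `x` would have no right descent at all. So every element, in
particular every reflection, is reached from `e` along `A`-labelled Bruhat edges.

The cocycle rule is proved as in the standard proof of the strong exchange condition: the
simple reflections act on `T × {±1}` by `(t, ε) ↦ (s t s, ε · (-1)^[t = s])` (with `{±1}`
encoded as `Bool` under `xor`), these actions
satisfy the Coxeter relations, and the sign acquired by `(t, +1)` under `w` is the parity of the
number of occurrences of `t` in the right inversion sequence of any word for `w`.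
-/

namespace CoxeterSystem

open List
open scoped Classical

variable {B : Type*} {W : Type*} [Group W] {M : CoxeterMatrix B} (cs : CoxeterSystem M W)

local prefix:100 "s" => cs.simple
local prefix:100 "π" => cs.wordProd
local prefix:100 "ris " => cs.rightInvSeq

noncomputable def reflectionPerm (i : B) : Equiv.Perm (W × Bool) :=
  Function.Involutive.toPerm (fun p => (s i * p.1 * s i, decide (p.1 = s i) ^^ p.2)) <| by
    rintro ⟨t, b⟩
    have hconj : s i * t * s i = s i ↔ t = s i := by
      rw [mul_assoc, mul_eq_left, mul_eq_one_iff_eq_inv, cs.inv_simple]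
    simp [← mul_assoc, hconj]

theorem reflectionPerm_apply (i : B) (t : W) (b : Bool) :
    cs.reflectionPerm i (t, b) = (s i * t * s i, decide (t = s i) ^^ b) := rfl

theorem prod_map_reflectionPerm_apply (ω : List B) (t : W) (b : Bool) :
    (ω.map cs.reflectionPerm).prod (t, b) =
      (π ω * t * (π ω)⁻¹, ((ris ω).count t).bodd ^^ b) := by
  induction ω with
  | nil => simp [wordProd_nil]
  | cons i ω ih =>
    have hconj : π ω * t * (π ω)⁻¹ = s i ↔ (π ω)⁻¹ * s i * π ω = t := by
      constructor <;> intro h <;> rw [← h] <;> group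
    rw [map_cons, prod_cons, Equiv.Perm.mul_apply, ih, reflectionPerm_apply, rightInvSeq,
      wordProd_cons, count_cons, Nat.bodd_add, Prod.mk.injEq]
    refine ⟨by simp [mul_assoc], ?_⟩
    by_cases h : π ω * t * (π ω)⁻¹ = s i
    · simp [h, hconj.mp h]
    · simp [h, mt hconj.mpr h]

theorem wordProd_flatten_replicate (i j : B) (m : ℕ) :
    π (replicate m [i, j]).flatten = (s i * s j) ^ m := by
  simp [wordProd, map_flatten, prod_flatten, map_replicate, prod_replicate]

theorem rightInvSeq_flatten_replicate (i j : B) (m : ℕ) :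
    ris (replicate m [i, j]).flatten =
      ((range (2 * m)).map fun n => (s j * s i) ^ n * s j).reverse := by
  induction m with
  | zero => simp
  | succ m ih =>
    have hinv : ((s i * s j) ^ m)⁻¹ = (s j * s i) ^ m := by
      rw [← inv_pow, mul_inv_rev, inv_simple, inv_simple]
    have hshift : s j * (s i * s j) ^ m = (s j * s i) ^ m * s j :=
      (SemiconjBy.pow_right (by simp only [SemiconjBy, mul_assoc]) m : SemiconjBy _ _ _).eq
    rw [replicate_succ, flatten_cons, cons_append, cons_append, nil_append, rightInvSeq,
      rightInvSeq, ih, wordProd_cons, wordProd_flatten_replicate,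
      show 2 * (m + 1) = 2 * m + 1 + 1 by ring, range_succ, range_succ]
    simp only [map_append, map_cons, map_nil, reverse_append, reverse_cons, reverse_nil,
      nil_append, cons_append, cons.injEq, and_true]
    constructor
    · rw [mul_inv_rev, inv_simple, hinv, hshift, show 2 * m + 1 = m + 1 + m by ring, pow_add,
        pow_succ]
      simp only [mul_assoc]
    · rw [hinv, mul_assoc, hshift, ← mul_assoc, ← pow_add, two_mul]

theorem isLiftable_reflectionPerm : M.IsLiftable cs.reflectionPerm := by
  intro i j
  ext ⟨t, b⟩ : 1
  have hpow : (cs.reflectionPerm i * cs.reflectionPerm j) ^ M i j =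
      ((replicate (M i j) [i, j]).flatten.map cs.reflectionPerm).prod := by
    simp [map_flatten, prod_flatten, map_replicate, prod_replicate]
  -- `(s j * s i) ^ n * s j` has period `M i j` in `n`, so each reflection occurs an even
  -- number of times in the right inversion sequence of the braid relator.
  have hperiodic : ((range (2 * M i j)).map fun n => (s j * s i) ^ n * s j) =
      ((range (M i j)).map fun n => (s j * s i) ^ n * s j) ++
        ((range (M i j)).map fun n => (s j * s i) ^ n * s j) := by
    rw [two_mul, range_add, map_append, map_map]
    congr 2
    ext n
    simp [pow_add, simple_mul_simple_pow']
  rw [hpow, prod_map_reflectionPerm_apply, wordProd_flatten_replicate, simple_mul_simple_pow,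
    rightInvSeq_flatten_replicate, count_reverse, hperiodic, count_append, Nat.bodd_add]
  simp

noncomputable def inversionRep : W →* Equiv.Perm (W × Bool) :=
  cs.lift ⟨cs.reflectionPerm, cs.isLiftable_reflectionPerm⟩

theorem inversionRep_wordProd_apply (ω : List B) (t : W) (b : Bool) :
    cs.inversionRep (π ω) (t, b) = (π ω * t * (π ω)⁻¹, ((ris ω).count t).bodd ^^ b) := by
  have h : ⇑cs.inversionRep ∘ cs.simple = cs.reflectionPerm :=
    funext (cs.lift_apply_simple cs.isLiftable_reflectionPerm)
  rw [← prod_map_reflectionPerm_apply, ← h, ← map_map, ← map_list_prod]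
  rfl

noncomputable def reflectionCocycle (w t : W) : Bool := (cs.inversionRep w (t, false)).2

theorem reflectionCocycle_wordProd (ω : List B) (t : W) :
    cs.reflectionCocycle (π ω) t = ((ris ω).count t).bodd := by
  simp [reflectionCocycle, inversionRep_wordProd_apply]

theorem inversionRep_apply (w t : W) (b : Bool) :
    cs.inversionRep w (t, b) = (w * t * w⁻¹, cs.reflectionCocycle w t ^^ b) := by
  obtain ⟨ω, rfl⟩ := cs.wordProd_surjective w
  rw [inversionRep_wordProd_apply, reflectionCocycle_wordProd]

theorem reflectionCocycle_mul (x y t : W) :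
    cs.reflectionCocycle (x * y) t =
      (cs.reflectionCocycle x (y * t * y⁻¹) ^^ cs.reflectionCocycle y t) := by
  rw [reflectionCocycle, map_mul, Equiv.Perm.mul_apply, inversionRep_apply, inversionRep_apply,
    Bool.xor_false]

theorem reflectionCocycle_one (t : W) : cs.reflectionCocycle 1 t = false := by
  simp [reflectionCocycle]

theorem reflectionCocycle_simple (i : B) (t : W) :
    cs.reflectionCocycle (s i) t = decide (t = s i) := by
  simp [reflectionCocycle, inversionRep, cs.lift_apply_simple cs.isLiftable_reflectionPerm,
    reflectionPerm_apply]

theorem reflectionCocycle_inv_conj (w t : W) :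
    cs.reflectionCocycle w⁻¹ (w * t * w⁻¹) = cs.reflectionCocycle w t := by
  have h := cs.reflectionCocycle_mul w⁻¹ w t
  rw [inv_mul_cancel, reflectionCocycle_one] at h
  simpa using h

variable {cs}

theorem isRightInversion_of_reflectionCocycle_eq_true {w t : W}
    (h : cs.reflectionCocycle w t = true) : cs.IsRightInversion w t := by
  obtain ⟨ω, hω, rfl⟩ := cs.exists_isReduced w
  rw [reflectionCocycle_wordProd] at h
  have hcount : (ris ω).count t ≠ 0 := fun h0 => by simp [h0] at h
  exact cs.isRightInversion_of_mem_rightInvSeq hω (count_pos_iff.mp (Nat.pos_of_ne_zero hcount))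

theorem IsReflection.reflectionCocycle_self {t : W} (ht : cs.IsReflection t) :
    cs.reflectionCocycle t t = true := by
  obtain ⟨w, i, rfl⟩ := ht
  have hconj : w⁻¹ * (w * s i * w⁻¹) * w⁻¹⁻¹ = s i := by group
  have hsimple : s i * s i * (s i)⁻¹ = s i := by simp
  rw [reflectionCocycle_mul, hconj, reflectionCocycle_mul, hsimple, reflectionCocycle_simple,
    reflectionCocycle_inv_conj]
  simp

theorem IsReflection.reflectionCocycle_eq_true_iff {t : W} (ht : cs.IsReflection t) (w : W) :
    cs.reflectionCocycle w t = true ↔ cs.IsRightInversion w t := by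
  refine ⟨isRightInversion_of_reflectionCocycle_eq_true, fun hw => ?_⟩
  have hwt : cs.reflectionCocycle (w * t) t = false := by
    by_contra hc
    exact ht.isRightInversion_mul_left_iff.mp
      (isRightInversion_of_reflectionCocycle_eq_true (by simpa using hc)) hw
  calc cs.reflectionCocycle w t = cs.reflectionCocycle (w * t * t) t := by
        rw [mul_assoc, ht.mul_self, mul_one]
    _ = true := by
        rw [reflectionCocycle_mul, ht.inv, mul_assoc, ht.mul_self, mul_one, hwt,
          ht.reflectionCocycle_self]
        rfl

theorem IsReflection.isRightInversion_mul_iff {t : W} (ht : cs.IsReflection t) (x y : W) :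
    cs.IsRightInversion (x * y) t ↔
      Xor (cs.IsRightInversion x (y * t * y⁻¹)) (cs.IsRightInversion y t) := by
  rw [← ht.reflectionCocycle_eq_true_iff, ← (ht.conj y).reflectionCocycle_eq_true_iff,
    ← ht.reflectionCocycle_eq_true_iff, reflectionCocycle_mul]
  cases cs.reflectionCocycle x (y * t * y⁻¹) <;> cases cs.reflectionCocycle y t <;> simp [Xor]

theorem isLeftInversion_of_forall_length_le {w₀ t : W}
    (hw₀ : ∀ x : W, cs.length x ≤ cs.length w₀) (ht : cs.IsReflection t) :
    cs.IsLeftInversion w₀ t :=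
  ⟨ht, (hw₀ _).lt_of_ne (ht.length_mul_right_ne w₀)⟩

theorem isLeftInversion_inv_mul_iff_of_forall_length_le {w₀ t : W}
    (hw₀ : ∀ x : W, cs.length x ≤ cs.length w₀) (ht : cs.IsReflection t) (x : W) :
    cs.IsLeftInversion (x⁻¹ * w₀) t ↔ ¬cs.IsRightInversion x t := by
  rw [← isRightInversion_inv_iff, mul_inv_rev, inv_inv, ht.isRightInversion_mul_iff,
    isRightInversion_inv_iff]
  simp [isLeftInversion_of_forall_length_le hw₀ (ht.conj x)]

theorem reflTransGen_aStep_of_exists_isRightInversion {A : Set W}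
    (hA : ∀ x ≠ 1, ∃ a ∈ A, cs.IsRightInversion x a) (x : W) :
    Relation.ReflTransGen (cs.AStep A) 1 x := by
  induction hx : cs.length x using Nat.strong_induction_on generalizing x with
  | _ n ih =>
    by_cases hx1 : x = 1
    · rw [hx1]
    obtain ⟨a, haA, ha, hlt⟩ := hA x hx1
    refine (ih _ (hx ▸ hlt) (x * a) rfl).tail ⟨a, haA, ha, ?_, hlt⟩
    rw [mul_assoc, ha.mul_self, mul_one]

theorem exists_isRightInversion_of_isJoin_of_forall_length_le {u v w₀ x : W}
    (hw₀ : ∀ x : W, cs.length x ≤ cs.length w₀) (hjoin : cs.IsJoin u v w₀) (hx : x ≠ 1) :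
    ∃ a ∈ cs.invSet u ∪ cs.invSet v, cs.IsRightInversion x a := by
  by_contra! hA
  have hub : ∀ y, cs.invSet y ⊆ cs.invSet u ∪ cs.invSet v → cs.wle y (x⁻¹ * w₀) :=
    fun y hy t ht =>
      (isLeftInversion_inv_mul_iff_of_forall_length_le hw₀ ht.1 x).mpr (hA t (hy ht))
  obtain ⟨i, hi⟩ := cs.exists_rightDescent_of_ne_one hx
  have hsi : cs.simple i ∈ cs.invSet w₀ :=
    isLeftInversion_of_forall_length_le hw₀ (cs.isReflection_simple i)
  exact (isLeftInversion_inv_mul_iff_of_forall_length_le hw₀ (cs.isReflection_simple i) x).mp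
    (hjoin.2.2 _ (hub u Set.subset_union_left) (hub v Set.subset_union_right) hsi)
    ((cs.isRightInversion_simple_iff_isRightDescent x i).mpr hi)

end CoxeterSystem

open CoxeterSystem in
theorem invSet_join_eq_bclosure_of_join_eq_longest_general
    {B : Type*} {W : Type*} [Group W] {M : CoxeterMatrix B} (cs : CoxeterSystem M W)
    (w₀ : W) (hw₀ : ∀ x : W, cs.length x ≤ cs.length w₀)
    (u v : W) (hjoin : cs.IsJoin u v w₀) :
    cs.invSet w₀ = cs.bclosure (cs.invSet u ∪ cs.invSet v) := by
  ext t
  constructor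
  · rintro ⟨ht, -⟩
    exact ⟨ht, reflTransGen_aStep_of_exists_isRightInversion
      (fun _ hx => exists_isRightInversion_of_isJoin_of_forall_length_le hw₀ hjoin hx) t⟩
  · rintro ⟨ht, -⟩
    exact isLeftInversion_of_forall_length_le hw₀ ht

open CoxeterSystem in
/-- In a finite Coxeter system, if `u ∨_R v = w₀` (the long element), then
`N(u ∨_R v) = ⟨N(u) ∪ N(v)⟩`. -/
theorem invSet_join_eq_bclosure_of_join_eq_longest
    {B : Type*} {W : Type*} [Group W] {M : CoxeterMatrix B} (cs : CoxeterSystem M W)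
    [Finite W] (w₀ : W) (hw₀ : ∀ x : W, cs.length x ≤ cs.length w₀)
    (u v : W) (hjoin : cs.IsJoin u v w₀) :
    cs.invSet w₀ = cs.bclosure (cs.invSet u ∪ cs.invSet v) :=
  invSet_join_eq_bclosure_of_join_eq_longest_general cs w₀ hw₀ u v hjoin
end
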